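/- arXiv:2512.05260 — 4 statements merged into one kernel-verified Lean document; each statement's English description precedes it below -/
import Mathlib

section
/- For all integers p ≥ 1, the sum over j = 0 to p-1 of binom(2p, 2j) · 2^{2p-2j} · B_{2p-2j} equals 2p - 1 + (2 - 2^{2p}) · B_{2p}, where B_n denotes the n-th Bernoulli number. -/
/-!
Since `(eᵗ + 1)(eᵗ - 1) = e²ᵗ - 1`, the exponential generating function `B(t) = t / (eᵗ - 1)`
satisfies `B(2t) (eᵗ + 1) = 2 B(t)`. Comparing coefficients of `tⁿ / n!` gives
`∑ᵢ C(n, i) 2ⁱ Bᵢ + 2ⁿ Bₙ = 2 Bₙ`. For `n = 2p` the odd Bernoulli numbers other than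
`B₁ = -1/2` vanish, so the odd terms contribute `-2p`, the term `i = 0` contributes `1`, and the
remaining even terms are the sum of the theorem.
-/

open PowerSeries Finset Nat

theorem PowerSeries.exp_sub_one_ne_zero (A : Type*) [CommRing A] [Algebra ℚ A] [Nontrivial A] :
    exp A - 1 ≠ 0 := by
  intro h
  simpa using congrArg (coeff 1) h

theorem PowerSeries.factorial_mul_coeff_mul_exp (F : ℚ⟦X⟧) (n : ℕ) :
    n ! * coeff n (F * exp ℚ) = ∑ i ∈ range (n + 1), n.choose i * (i ! * coeff i F) := by
  rw [coeff_mul, Nat.sum_antidiagonal_eq_sum_range_succ (fun i j => coeff i F * coeff j (exp ℚ)),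
    mul_sum]
  refine sum_congr rfl fun i hi => ?_
  rw [Nat.cast_choose ℚ (mem_range_succ_iff.mp hi), coeff_exp, Algebra.algebraMap_self,
    RingHom.id_apply]
  field_simp

theorem rescale_two_bernoulliPowerSeries_mul_exp_add_one (A : Type*) [CommRing A] [Algebra ℚ A]
    [IsDomain A] :
    rescale (2 : A) (bernoulliPowerSeries A) * (exp A + 1) = 2 * bernoulliPowerSeries A := by
  refine mul_right_cancel₀ (exp_sub_one_ne_zero A) ?_
  calc rescale (2 : A) (bernoulliPowerSeries A) * (exp A + 1) * (exp A - 1)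
      = rescale (2 : A) (bernoulliPowerSeries A * (exp A - 1)) := by
        rw [map_mul, map_sub, map_one, ← Nat.cast_ofNat, ← exp_pow_eq_rescale_exp]
        ring
    _ = 2 * bernoulliPowerSeries A * (exp A - 1) := by
        rw [mul_assoc, bernoulliPowerSeries_mul_exp_sub_one, rescale_X, map_ofNat]

theorem sum_range_choose_mul_two_pow_mul_bernoulli (n : ℕ) :
    ∑ i ∈ range (n + 1), (n.choose i : ℚ) * 2 ^ i * bernoulli i = (2 - 2 ^ n) * bernoulli n := by
  have hcoeff : ∀ i, (i ! : ℚ) * coeff i (bernoulliPowerSeries ℚ) = bernoulli i := fun i => by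
    simp [bernoulliPowerSeries, field]
  have h := congrArg (fun F => (n ! : ℚ) * coeff n F)
    (rescale_two_bernoulliPowerSeries_mul_exp_add_one ℚ)
  simp only [mul_add, mul_one, map_add, factorial_mul_coeff_mul_exp, coeff_rescale] at h
  simp only [mul_left_comm (_ ! : ℚ) ((2 : ℚ) ^ _), hcoeff, ← mul_assoc,
    ← map_ofNat (C (R := ℚ)), coeff_C_mul] at h
  rw [mul_comm (n ! : ℚ), mul_assoc, hcoeff] at h
  linear_combination h

theorem Finset.sum_range_two_mul_add_one {M : Type*} [AddCommMonoid M] (f : ℕ → M) (n : ℕ) :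
    ∑ i ∈ range (2 * n + 1), f i =
      f 0 + ∑ k ∈ range n, f (2 * k + 1) + ∑ k ∈ range n, f (2 * k + 2) := by
  induction n with
  | zero => simp
  | succ n ih =>
    rw [show 2 * (n + 1) + 1 = 2 * n + 1 + 1 + 1 by ring, sum_range_succ, sum_range_succ, ih,
      sum_range_succ, sum_range_succ]
    abel

theorem sum_range_choose_odd_mul_two_pow_mul_bernoulli (n : ℕ) {p : ℕ} (hp : p ≠ 0) :
    ∑ k ∈ range p, (n.choose (2 * k + 1) : ℚ) * 2 ^ (2 * k + 1) * bernoulli (2 * k + 1) = -n := by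
  rw [sum_eq_single_of_mem 0 (mem_range.2 (Nat.pos_of_ne_zero hp))]
  · simp [bernoulli_one]
    ring
  · intro k _ hk
    rw [bernoulli_eq_zero_of_odd (odd_two_mul_add_one k) (by lia), mul_zero]

theorem sum_range_choose_two_mul_mul_two_pow_sub_mul_bernoulli (p : ℕ) :
    ∑ j ∈ range p,
      ((2 * p).choose (2 * j) : ℚ) * 2 ^ (2 * p - 2 * j) * bernoulli (2 * p - 2 * j) =
      ∑ k ∈ range p,
        ((2 * p).choose (2 * k + 2) : ℚ) * 2 ^ (2 * k + 2) * bernoulli (2 * k + 2) := by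
  rw [← sum_range_reflect]
  refine sum_congr rfl fun k hk => ?_
  have hk := mem_range.1 hk
  rw [← Nat.choose_symm (by lia), show 2 * p - 2 * (p - 1 - k) = 2 * k + 2 by lia]

theorem bernoulli_sum_even_general (p : ℕ) :
    ∑ j ∈ Finset.range p,
      (Nat.choose (2 * p) (2 * j) : ℚ) * 2 ^ (2 * p - 2 * j) *
        bernoulli (2 * p - 2 * j) =
      2 * p - 1 + (2 - 2 ^ (2 * p)) * bernoulli (2 * p) := by
  rcases eq_or_ne p 0 with rfl | hp
  · norm_num
  have h := sum_range_choose_mul_two_pow_mul_bernoulli (2 * p)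
  rw [sum_range_two_mul_add_one, sum_range_choose_odd_mul_two_pow_mul_bernoulli _ hp,
    Nat.choose_zero_right, bernoulli_zero] at h
  rw [sum_range_choose_two_mul_mul_two_pow_sub_mul_bernoulli]
  push_cast at h
  linear_combination h

theorem bernoulli_sum_even (p : ℕ) (hp : 1 ≤ p) :
    ∑ j ∈ Finset.range p,
      (Nat.choose (2 * p) (2 * j) : ℚ) * 2 ^ (2 * p - 2 * j) *
        bernoulli (2 * p - 2 * j) =
      2 * p - 1 + (2 - 2 ^ (2 * p)) * bernoulli (2 * p) :=
  bernoulli_sum_even_general p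
end

section
/- For all integers p ≥ 1, the sum over j = 0 to p-1 of binom(2p, 2j) · 2^{2p-2j} · (2^{2p-2j} - 1) · B_{2p-2j} equals 2p, where B_n denotes the n-th Bernoulli number. -/
/-!
With `B(t) = t / (e^t - 1)`, the series `e^t (B(4t) - B(2t)) = -2t e^t / (e^{2t} + 1) = -t / cosh t`
is odd, so its even coefficients vanish. Its coefficient of `t^n` is
`Σ_k C(n, k) (4^k - 2^k) B_k / n!`; for `n = 2p` the odd `k ≥ 3` drop out, `k = 1` contributes
`-2p`, and the even `k` give the sum in question.
-/

open PowerSeries Finset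
open scoped Nat

theorem Finset.sum_range_two_mul {M : Type*} [AddCommMonoid M] (f : ℕ → M) (p : ℕ) :
    ∑ k ∈ range (2 * p), f k = ∑ j ∈ range p, (f (2 * j) + f (2 * j + 1)) := by
  induction p with
  | zero => simp
  | succ p ih =>
    rw [mul_add, mul_one, sum_range_succ, sum_range_succ, ih, sum_range_succ, add_assoc]

theorem PowerSeries.coeff_eq_zero_of_rescale_neg_one_eq_neg {R : Type*} [CommRing R]
    [IsAddTorsionFree R] {f : R⟦X⟧} (hf : rescale (-1) f = -f) {n : ℕ} (hn : Even n) :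
    coeff n f = 0 := by
  have h := congrArg (coeff n) hf
  rwa [coeff_rescale, hn.neg_one_pow, one_mul, map_neg, self_eq_neg] at h

theorem rescale_bernoulliPowerSeries_mul (A : Type*) [CommRing A] [Algebra ℚ A] (a : A) :
    rescale a (bernoulliPowerSeries A) * (rescale a (exp A) - 1) = C a * X := by
  simpa using congrArg (rescale a) (bernoulliPowerSeries_mul_exp_sub_one A)

theorem rescale_bernoulliPowerSeries_four_sub_two_mul_rescale_exp_two_add_one :
    (rescale 4 (bernoulliPowerSeries ℚ) - rescale 2 (bernoulliPowerSeries ℚ)) *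
      (rescale 2 (exp ℚ) + 1) = -(2 * X) := by
  set u := rescale (2 : ℚ) (exp ℚ)
  have h4 := rescale_bernoulliPowerSeries_mul ℚ 4
  have h2 := rescale_bernoulliPowerSeries_mul ℚ 2
  have hu : rescale (4 : ℚ) (exp ℚ) = u * u := by
    rw [exp_mul_exp_eq_exp_add]; norm_num
  rw [hu, map_ofNat C] at h4
  rw [map_ofNat C] at h2
  have hu1 : u - 1 ≠ 0 := fun h ↦ by simpa [u, coeff_rescale] using congrArg (coeff 1) h
  refine eq_of_sub_eq_zero ((mul_eq_zero.mp ?_).resolve_right hu1)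
  linear_combination h4 - (u + 1) * h2

theorem rescale_neg_one_exp_mul_bernoulliPowerSeries_four_sub_two :
    rescale (-1)
        (exp ℚ * (rescale 4 (bernoulliPowerSeries ℚ) - rescale 2 (bernoulliPowerSeries ℚ))) =
    -(exp ℚ * (rescale 4 (bernoulliPowerSeries ℚ) - rescale 2 (bernoulliPowerSeries ℚ))) := by
  set g := exp ℚ * (rescale 4 (bernoulliPowerSeries ℚ) - rescale 2 (bernoulliPowerSeries ℚ))
  have hg : g * (rescale 2 (exp ℚ) + 1) = -(2 * X * exp ℚ) := by
    rw [mul_assoc, rescale_bernoulliPowerSeries_four_sub_two_mul_rescale_exp_two_add_one]; ring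
  have hg' := congrArg (rescale (-1 : ℚ)) hg
  simp only [map_mul, map_add, map_neg, map_one, map_ofNat, rescale_neg_one_X,
    rescale_rescale] at hg'
  have h1 : rescale (-1 : ℚ) (exp ℚ) * rescale 2 (exp ℚ) = exp ℚ := by
    rw [exp_mul_exp_eq_exp_add]; norm_num
  have h2 : rescale (2 * -1 : ℚ) (exp ℚ) * rescale 2 (exp ℚ) = 1 := by
    rw [exp_mul_exp_eq_exp_add]; norm_num
  have hu1 : rescale (2 : ℚ) (exp ℚ) + 1 ≠ 0 := fun h ↦ by
    simpa [coeff_rescale, -coeff_zero_eq_constantCoeff] using congrArg (coeff 0) h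
  refine eq_neg_of_add_eq_zero_left ((mul_eq_zero.mp ?_).resolve_right hu1)
  -- `e^{2t}` times `hg'` reads `g(-t) (1 + e^{2t}) = 2t e^t`, the negative of `hg`.
  linear_combination rescale (2 : ℚ) (exp ℚ) * hg' + hg - rescale (-1 : ℚ) g * h2 + 2 * X * h1

theorem factorial_mul_coeff_exp_mul_rescale_bernoulliPowerSeries (a : ℚ) (n : ℕ) :
    n ! * coeff n (exp ℚ * rescale a (bernoulliPowerSeries ℚ)) =
      ∑ k ∈ range (n + 1), n.choose k * a ^ (n - k) * bernoulli (n - k) := by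
  rw [coeff_mul, Nat.sum_antidiagonal_eq_sum_range_succ (fun i j ↦ coeff i (exp ℚ) *
    coeff j (rescale a (bernoulliPowerSeries ℚ))), mul_sum]
  refine sum_congr rfl fun k hk ↦ ?_
  rw [Nat.cast_choose ℚ (Nat.lt_succ_iff.mp (mem_range.mp hk))]
  simp only [coeff_exp, coeff_rescale, bernoulliPowerSeries, coeff_mk, Algebra.algebraMap_self,
    RingHom.id_apply]
  field_simp

theorem sum_choose_mul_four_pow_sub_two_pow_mul_bernoulli_eq_zero {n : ℕ} (hn : Even n) :
    ∑ k ∈ range (n + 1), n.choose k * ((4 : ℚ) ^ (n - k) - 2 ^ (n - k)) * bernoulli (n - k) =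
      0 := by
  have h := congrArg ((n ! : ℚ) * ·) (PowerSeries.coeff_eq_zero_of_rescale_neg_one_eq_neg
    rescale_neg_one_exp_mul_bernoulliPowerSeries_four_sub_two hn)
  simp only [mul_sub, map_sub, mul_zero, factorial_mul_coeff_exp_mul_rescale_bernoulliPowerSeries,
    ← sum_sub_distrib] at h
  rw [← h]
  exact sum_congr rfl fun k _ ↦ by ring

theorem sum_range_choose_odd_mul_four_pow_sub_two_pow_mul_bernoulli {p : ℕ} (hp : 1 ≤ p) :
    ∑ j ∈ range p, (2 * p).choose (2 * j + 1) *
      ((4 : ℚ) ^ (2 * p - (2 * j + 1)) - 2 ^ (2 * p - (2 * j + 1))) *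
        bernoulli (2 * p - (2 * j + 1)) = -(2 * p) := by
  rw [sum_eq_single_of_mem (p - 1) (mem_range.mpr (by omega))]
  · rw [show 2 * p - (2 * (p - 1) + 1) = 1 by omega, show 2 * (p - 1) + 1 = 2 * p - 1 by omega,
      Nat.choose_symm (by omega), Nat.choose_one_right, bernoulli_one]
    push_cast
    ring
  · intro j hj _
    have hjp := mem_range.mp hj
    rw [bernoulli_eq_zero_of_odd ⟨p - j - 1, by omega⟩ (by omega), mul_zero]

theorem bernoulli_sum_even' (p : ℕ) (hp : 1 ≤ p) :
    ∑ j ∈ Finset.range p,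
      (Nat.choose (2 * p) (2 * j) : ℚ) * 2 ^ (2 * p - 2 * j) *
        (2 ^ (2 * p - 2 * j) - 1) * bernoulli (2 * p - 2 * j) = 2 * p := by
  have h := sum_choose_mul_four_pow_sub_two_pow_mul_bernoulli_eq_zero (even_two_mul p)
  rw [sum_range_succ, sum_range_two_mul, sum_add_distrib,
    sum_range_choose_odd_mul_four_pow_sub_two_pow_mul_bernoulli hp] at h
  have h4 (m : ℕ) : (4 : ℚ) ^ m - 2 ^ m = 2 ^ m * (2 ^ m - 1) := by
    rw [show (4 : ℚ) = 2 * 2 by norm_num, mul_pow]; ring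
  simp only [h4, ← mul_assoc, Nat.sub_self, pow_zero, sub_self, mul_zero, zero_mul,
    add_zero] at h
  linear_combination h
end

section
/- For real s > 1, the limit as ℓ → ∞ of (1/binom(2ℓ+1, ℓ+1)) · Σ_{k=0}^{ℓ} binom(2ℓ+1, ℓ-k) · (-1)^k / (2k+1)^s equals β(s), the Dirichlet beta function. -/
/-!
With `w ℓ k = binom(2ℓ+1, ℓ-k) / binom(2ℓ+1, ℓ+1)` the sum is `Σ_{k ≤ ℓ} w ℓ k (-1)^k/(2k+1)^s`.
The weights lie in `[0, 1]`, as `binom(2ℓ+1, ℓ+1)` is a largest coefficient of its row, and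
`w ℓ k = ∏_{i<k} (ℓ-i)/(ℓ+2+i) → 1` for each fixed `k`. Since the series for `β(s)` converges
absolutely for `s > 1`, Tannery's theorem (dominated convergence for series) gives the limit.
-/

open Filter Finset Topology

theorem tendsto_sum_range_smul_of_tendsto_one {E : Type*} [NormedAddCommGroup E]
    [NormedSpace ℝ E] [CompleteSpace E] {a : ℕ → E} (ha : Summable (‖a ·‖))
    {w : ℕ → ℕ → ℝ} (hw_le : ∀ ℓ k, k ≤ ℓ → ‖w ℓ k‖ ≤ 1)
    (hw : ∀ k, Tendsto (w · k) atTop (𝓝 1)) :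
    Tendsto (fun ℓ => ∑ k ∈ range (ℓ + 1), w ℓ k • a k) atTop (𝓝 (∑' k, a k)) := by
  set f : ℕ → ℕ → E := fun ℓ k => if k ∈ range (ℓ + 1) then w ℓ k • a k else 0
  have hf_lim (k : ℕ) : Tendsto (f · k) atTop (𝓝 (a k)) := by
    have h : Tendsto (fun ℓ => w ℓ k • a k) atTop (𝓝 (a k)) := by
      simpa using (hw k).smul_const (a k)
    refine h.congr' ((eventually_ge_atTop k).mono fun ℓ hℓ => ?_)
    simp only [f, if_pos (mem_range_succ_iff.mpr hℓ)]
  have hf_le (ℓ k : ℕ) : ‖f ℓ k‖ ≤ ‖a k‖ := by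
    by_cases hk : k ∈ range (ℓ + 1)
    · simp only [f, if_pos hk, norm_smul]
      exact mul_le_of_le_one_left (norm_nonneg _) (hw_le ℓ k (mem_range_succ_iff.mp hk))
    · simp only [f, if_neg hk, norm_zero]
      exact norm_nonneg _
  refine (tendsto_tsum_of_dominated_convergence ha hf_lim (.of_forall hf_le)).congr fun ℓ => ?_
  rw [tsum_eq_sum fun k hk => if_neg hk]
  exact sum_congr rfl fun k hk => if_pos hk

theorem tendsto_natCast_sub_div_add_atTop (a b : ℝ) :
    Tendsto (fun n : ℕ => ((n : ℝ) - a) / (n + b)) atTop (𝓝 1) := by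
  have h : Tendsto (fun n : ℕ => a / ((n : ℝ) + b)) atTop (𝓝 0) :=
    tendsto_const_nhds.div_atTop (tendsto_atTop_add_const_right _ b tendsto_natCast_atTop_atTop)
  simpa [sub_div] using (tendsto_natCast_div_add_atTop b).sub h

theorem choose_sub_div_choose_eq_prod {ℓ k : ℕ} (hk : k ≤ ℓ) :
    (Nat.choose (2 * ℓ + 1) (ℓ - k) : ℝ) / Nat.choose (2 * ℓ + 1) (ℓ + 1) =
      ∏ i ∈ range k, ((ℓ : ℝ) - i) / (ℓ + (2 + i)) := by
  induction k with
  | zero =>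
    rw [Nat.sub_zero, prod_range_zero, Nat.choose_symm_half, div_self]
    exact_mod_cast (Nat.choose_pos (by omega)).ne'
  | succ k ih =>
    have hstep := Nat.choose_succ_right_eq (2 * ℓ + 1) (ℓ - (k + 1))
    rw [show ℓ - (k + 1) + 1 = ℓ - k by omega,
      show 2 * ℓ + 1 - (ℓ - (k + 1)) = ℓ + (2 + k) by omega] at hstep
    have hstep' := congrArg (Nat.cast : ℕ → ℝ) hstep
    push_cast [Nat.cast_sub (by omega : k ≤ ℓ)] at hstep'
    have : (ℓ : ℝ) + (2 + k) ≠ 0 := by positivity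
    rw [prod_range_succ, ← ih (by omega), div_mul_div_comm, hstep', mul_div_mul_right _ _ this]

theorem choose_le_choose_succ_half (ℓ r : ℕ) :
    Nat.choose (2 * ℓ + 1) r ≤ Nat.choose (2 * ℓ + 1) (ℓ + 1) := by
  simpa [Nat.choose_symm_half, show (2 * ℓ + 1) / 2 = ℓ by omega] using
    Nat.choose_le_middle r (2 * ℓ + 1)

theorem norm_choose_div_choose_succ_half_le_one (ℓ r : ℕ) :
    ‖(Nat.choose (2 * ℓ + 1) r : ℝ) / Nat.choose (2 * ℓ + 1) (ℓ + 1)‖ ≤ 1 := by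
  rw [Real.norm_of_nonneg (by positivity)]
  exact div_le_one_of_le₀ (by exact_mod_cast choose_le_choose_succ_half ℓ r) (by positivity)

theorem tendsto_choose_sub_div_choose (k : ℕ) :
    Tendsto (fun ℓ : ℕ =>
      (Nat.choose (2 * ℓ + 1) (ℓ - k) : ℝ) / Nat.choose (2 * ℓ + 1) (ℓ + 1)) atTop (𝓝 1) := by
  have h : Tendsto (fun ℓ : ℕ => ∏ i ∈ range k, ((ℓ : ℝ) - i) / (ℓ + (2 + i))) atTop
      (𝓝 (∏ _i ∈ range k, 1)) :=
    tendsto_finsetProd _ fun i _ => tendsto_natCast_sub_div_add_atTop _ _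
  rw [prod_const_one] at h
  exact h.congr' <|
    (eventually_ge_atTop k).mono fun ℓ hℓ => (choose_sub_div_choose_eq_prod hℓ).symm

theorem summable_one_div_two_mul_add_one_rpow {s : ℝ} (hs : 1 < s) :
    Summable fun k : ℕ => 1 / (2 * (k : ℝ) + 1) ^ s := by
  refine ((summable_nat_add_iff 1).mpr (Real.summable_one_div_nat_rpow.mpr hs)).of_nonneg_of_le
    (fun k => by positivity) fun k => ?_
  gcongr
  push_cast
  linarith [k.cast_nonneg (α := ℝ)]

theorem summable_norm_neg_one_pow_div_two_mul_add_one_rpow {s : ℝ} (hs : 1 < s) :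
    Summable fun k : ℕ => ‖(-1) ^ k / (2 * (k : ℝ) + 1) ^ s‖ := by
  refine (summable_one_div_two_mul_add_one_rpow hs).congr fun k => ?_
  rw [norm_div, norm_pow, norm_neg, norm_one, one_pow, Real.norm_of_nonneg (by positivity)]

theorem tendsto_binom_weighted_beta (s : ℝ) (hs : 1 < s) :
    Filter.Tendsto
      (fun ℓ : ℕ =>
        (1 / (Nat.choose (2 * ℓ + 1) (ℓ + 1) : ℝ)) *
          ∑ k ∈ Finset.range (ℓ + 1),
            (Nat.choose (2 * ℓ + 1) (ℓ - k) : ℝ) * (-1) ^ k / (2 * (k : ℝ) + 1) ^ s)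
      Filter.atTop
      (nhds (∑' k : ℕ, (-1) ^ k / (2 * (k : ℝ) + 1) ^ s)) := by
  refine (tendsto_sum_range_smul_of_tendsto_one
    (summable_norm_neg_one_pow_div_two_mul_add_one_rpow hs)
    (fun ℓ k _ => norm_choose_div_choose_succ_half_le_one ℓ (ℓ - k))
    tendsto_choose_sub_div_choose).congr fun ℓ => ?_
  rw [mul_sum]
  refine sum_congr rfl fun k _ => ?_
  rw [smul_eq_mul]
  ring
end

section
/- The infinite series Σ_{k=1}^{∞} 2^k / (binom(2k,k) · 2k · (2k+2)) converges and equals (π² - 4π + 8)/32. -/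
/-!
Writing `1 / binom(2k, k) = (2k + 1) 4⁻ᵏ ∫₀¹ (1 - x²)ᵏ dx` turns the series into the integral over
`(0, 1)` of a power series in `u = (1 - x²) / 2`, whose sum is `(-log (1 - u) (1 + 1/u) - 1) / 4`.
The part `-log ((1 + x²) / 2)` has an elementary antiderivative and contributes `2 - π/2`. The part
with `1/u` becomes `∫₀¹ (2 log (1 + s) - log (1 + s²)) / s ds` under `x = (1 - s) / (1 + s)`, and
expanding both logarithms reduces it to `∑ (-1)ⁿ / (n + 1)² = π² / 12`.
-/

open MeasureTheory Set Real

section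

variable {E : Type*} [NormedAddCommGroup E] [NormedSpace ℝ E]

theorem setIntegral_Ioo_eq_intervalIntegral {a b : ℝ} (hab : a ≤ b) (f : ℝ → E) :
    ∫ x in Ioo a b, f x = ∫ x in a..b, f x := by
  rw [intervalIntegral.integral_of_le hab, integral_Ioc_eq_integral_Ioo]

theorem one_sub_div_one_add_involutive {s : ℝ} (hs : s ≠ -1) :
    (1 - (1 - s) / (1 + s)) / (1 + (1 - s) / (1 + s)) = s := by
  have : 1 + s ≠ 0 := fun h => hs (by linarith)
  field_simp
  ring

theorem mapsTo_one_sub_div_one_add :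
    MapsTo (fun s : ℝ => (1 - s) / (1 + s)) (Ioo 0 1) (Ioo 0 1) :=
  fun s ⟨hs₀, hs₁⟩ =>
    ⟨div_pos (by linarith) (by linarith), (div_lt_one (by linarith)).2 (by linarith)⟩

theorem image_one_sub_div_one_add_Ioo :
    (fun s : ℝ => (1 - s) / (1 + s)) '' Ioo 0 1 = Ioo 0 1 :=
  mapsTo_one_sub_div_one_add.image_subset.antisymm fun y hy =>
    ⟨_, mapsTo_one_sub_div_one_add hy, one_sub_div_one_add_involutive (by linarith [hy.1])⟩

theorem injOn_one_sub_div_one_add : InjOn (fun s : ℝ => (1 - s) / (1 + s)) (Ioo 0 1) :=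
  LeftInvOn.injOn (f₁' := fun s : ℝ => (1 - s) / (1 + s))
    fun s hs => one_sub_div_one_add_involutive (by linarith [hs.1])

theorem hasDerivAt_one_sub_div_one_add {s : ℝ} (hs : s ≠ -1) :
    HasDerivAt (fun s : ℝ => (1 - s) / (1 + s)) (-2 / (1 + s) ^ 2) s := by
  have : 1 + s ≠ 0 := fun h => hs (by linarith)
  refine (((hasDerivAt_id' s).const_sub 1).div ((hasDerivAt_id' s).const_add 1) this).congr_deriv ?_
  ring

theorem hasDerivWithinAt_one_sub_div_one_add_Ioo :
    ∀ s ∈ Ioo (0 : ℝ) 1,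
      HasDerivWithinAt (fun s : ℝ => (1 - s) / (1 + s)) (-2 / (1 + s) ^ 2) (Ioo 0 1) s :=
  fun s hs => (hasDerivAt_one_sub_div_one_add (by linarith [hs.1])).hasDerivWithinAt

theorem integral_Ioo_zero_one_comp_one_sub_div_one_add (g : ℝ → E) :
    ∫ x in Ioo (0 : ℝ) 1, g x =
      ∫ s in Ioo (0 : ℝ) 1, (2 / (1 + s) ^ 2) • g ((1 - s) / (1 + s)) := by
  conv_lhs => rw [← image_one_sub_div_one_add_Ioo]
  rw [integral_image_eq_integral_abs_deriv_smul measurableSet_Ioo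
    hasDerivWithinAt_one_sub_div_one_add_Ioo injOn_one_sub_div_one_add]
  simp only [abs_div, abs_neg, abs_two, abs_pow, sq_abs]

theorem integrableOn_Ioo_zero_one_iff_comp_one_sub_div_one_add (g : ℝ → E) :
    IntegrableOn g (Ioo 0 1) ↔
      IntegrableOn (fun s => (2 / (1 + s) ^ 2) • g ((1 - s) / (1 + s))) (Ioo 0 1) := by
  conv_lhs => rw [← image_one_sub_div_one_add_Ioo]
  rw [integrableOn_image_iff_integrableOn_abs_deriv_smul measurableSet_Ioo
    hasDerivWithinAt_one_sub_div_one_add_Ioo injOn_one_sub_div_one_add]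
  simp only [abs_div, abs_neg, abs_two, abs_pow, sq_abs]

end

theorem integral_one_sub_sq_pow_succ (k : ℕ) :
    (2 * k + 3 : ℝ) * ∫ x in (0 : ℝ)..1, (1 - x ^ 2) ^ (k + 1) =
      (2 * k + 2) * ∫ x in (0 : ℝ)..1, (1 - x ^ 2) ^ k := by
  -- integration by parts: `x (1 - x²)^(k+1)` vanishes at both ends
  have hderiv (x : ℝ) : HasDerivAt (fun x : ℝ => x * (1 - x ^ 2) ^ (k + 1))
      ((2 * k + 3) * (1 - x ^ 2) ^ (k + 1) - (2 * k + 2) * (1 - x ^ 2) ^ k) x := by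
    refine ((hasDerivAt_id' x).fun_mul
      (((hasDerivAt_pow 2 x).const_sub 1).fun_pow (k + 1))).congr_deriv ?_
    simp only [Nat.add_sub_cancel]
    push_cast
    ring
  have hftc := intervalIntegral.integral_eq_sub_of_hasDerivAt (fun x _ => hderiv x)
    (Continuous.intervalIntegrable (by fun_prop) 0 1)
  rw [intervalIntegral.integral_sub (Continuous.intervalIntegrable (by fun_prop) 0 1)
    (Continuous.intervalIntegrable (by fun_prop) 0 1), intervalIntegral.integral_const_mul,
    intervalIntegral.integral_const_mul] at hftc
  norm_num at hftc
  linarith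

theorem integral_one_sub_sq_pow (k : ℕ) :
    ∫ x in (0 : ℝ)..1, (1 - x ^ 2) ^ k = 4 ^ k / ((2 * k + 1 : ℝ) * k.centralBinom) := by
  induction k with
  | zero => simp
  | succ k ih =>
    have hrec := integral_one_sub_sq_pow_succ k
    have hbinom : ((k + 1) * (k + 1).centralBinom : ℝ) = 2 * (2 * k + 1) * k.centralBinom := by
      exact_mod_cast Nat.succ_mul_centralBinom_succ k
    have hC : (0 : ℝ) < k.centralBinom := mod_cast k.centralBinom_pos
    have hD : (0 : ℝ) < (k + 1).centralBinom := mod_cast (k + 1).centralBinom_pos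
    rw [ih] at hrec
    field_simp at hrec
    rw [eq_div_iff (by positivity)]
    apply mul_left_cancel₀ (show (k + 1 : ℝ) ≠ 0 by positivity)
    push_cast
    linear_combination
      ((2 * k + 3) * ∫ x in (0 : ℝ)..1, (1 - x ^ 2) ^ (k + 1)) * hbinom + 2 * hrec

theorem two_pow_div_centralBinom_eq_integral (k : ℕ) :
    (2 : ℝ) ^ (k + 1) / ((k + 1).centralBinom * (2 * ((k : ℝ) + 1)) * (2 * ((k : ℝ) + 1) + 2)) =
      (∫ x in Ioo (0 : ℝ) 1,
        (((k : ℝ) + 1)⁻¹ + ((k : ℝ) + 2)⁻¹) * ((1 - x ^ 2) / 2) ^ (k + 1)) / 4 := by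
  have hintegrand (x : ℝ) : (((k : ℝ) + 1)⁻¹ + ((k : ℝ) + 2)⁻¹) * ((1 - x ^ 2) / 2) ^ (k + 1) =
      (((k : ℝ) + 1)⁻¹ + ((k : ℝ) + 2)⁻¹) / 2 ^ (k + 1) * (1 - x ^ 2) ^ (k + 1) := by
    rw [div_pow]
    ring
  have hD : (0 : ℝ) < (k + 1).centralBinom := mod_cast (k + 1).centralBinom_pos
  simp only [hintegrand]
  rw [integral_const_mul, setIntegral_Ioo_eq_intervalIntegral zero_le_one, integral_one_sub_sq_pow,
    show (4 : ℝ) = 2 * 2 by norm_num, mul_pow]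
  push_cast
  field_simp
  ring

theorem hasSum_inv_add_inv_mul_pow {u : ℝ} (hu : |u| < 1) (hu₀ : u ≠ 0) :
    HasSum (fun k : ℕ => (((k : ℝ) + 1)⁻¹ + ((k : ℝ) + 2)⁻¹) * u ^ (k + 1))
      (-log (1 - u) * (1 + u⁻¹) - 1) := by
  have hlog := hasSum_pow_div_log_of_abs_lt_one hu
  have hshift : HasSum (fun k : ℕ => u ^ (k + 2) / ((k : ℝ) + 2)) (-log (1 - u) - u) := by
    simpa [add_assoc, one_add_one_eq_two] using (hasSum_nat_add_iff' 1).2 hlog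
  convert hlog.add (hshift.mul_left u⁻¹) using 1
  · ext k
    field_simp
    ring
  · field_simp
    ring

theorem hasSum_integral_inv_add_inv_mul_pow :
    HasSum (fun k : ℕ => ∫ x in Ioo (0 : ℝ) 1,
        (((k : ℝ) + 1)⁻¹ + ((k : ℝ) + 2)⁻¹) * ((1 - x ^ 2) / 2) ^ (k + 1))
      (∫ x in Ioo (0 : ℝ) 1, (-log ((1 + x ^ 2) / 2) * (1 + 2 / (1 - x ^ 2)) - 1)) := by
  refine hasSum_integral_of_dominated_convergence (fun k _ => (1 / 2 : ℝ) ^ k)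
    (fun k => (Continuous.aestronglyMeasurable (by fun_prop))) (fun k => ?_)
    (ae_of_all _ fun _ => summable_geometric_two) (integrableOn_const measure_Ioo_lt_top.ne) ?_
  all_goals rw [ae_restrict_iff' measurableSet_Ioo]; refine ae_of_all _ fun x ⟨hx₀, hx₁⟩ => ?_
  · have hu₀ : 0 ≤ (1 - x ^ 2) / 2 := by nlinarith
    have hu₁ : (1 - x ^ 2) / 2 ≤ 1 / 2 := by nlinarith
    have hcoef : ((k : ℝ) + 1)⁻¹ + ((k : ℝ) + 2)⁻¹ ≤ 2 := by
      have := inv_le_one_of_one_le₀ (by linarith [k.cast_nonneg (α := ℝ)] : (1 : ℝ) ≤ k + 1)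
      have := inv_le_one_of_one_le₀ (by linarith [k.cast_nonneg (α := ℝ)] : (1 : ℝ) ≤ k + 2)
      linarith
    rw [Real.norm_of_nonneg (by positivity)]
    calc _ ≤ 2 * (1 / 2 : ℝ) ^ (k + 1) := by gcongr
      _ = (1 / 2) ^ k := by ring
  · have hu : |(1 - x ^ 2) / 2| < 1 := by rw [abs_lt]; constructor <;> nlinarith
    have h := hasSum_inv_add_inv_mul_pow hu (by nlinarith)
    rwa [inv_div, show 1 - (1 - x ^ 2) / 2 = (1 + x ^ 2) / 2 by ring] at h

theorem integral_neg_log_one_add_sq_div_two :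
    ∫ x in Ioo (0 : ℝ) 1, -log ((1 + x ^ 2) / 2) = 2 - π / 2 := by
  have hderiv (x : ℝ) : HasDerivAt (fun x => 2 * x - 2 * arctan x - x * log ((1 + x ^ 2) / 2))
      (-log ((1 + x ^ 2) / 2)) x := by
    have hlog := (((hasDerivAt_pow 2 x).const_add 1).div_const 2).log (by positivity)
    refine ((((hasDerivAt_id' x).const_mul 2).sub ((hasDerivAt_arctan x).const_mul 2)).sub
      ((hasDerivAt_id' x).fun_mul hlog)).congr_deriv ?_
    field_simp
    ring
  rw [setIntegral_Ioo_eq_intervalIntegral zero_le_one,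
    intervalIntegral.integral_eq_sub_of_hasDerivAt (fun x _ => hderiv x)
    (Continuous.intervalIntegrable (by fun_prop (disch := intro; positivity)) 0 1)]
  norm_num
  ring

theorem hasSum_neg_one_pow_div_succ_sq :
    HasSum (fun n : ℕ => (-1 : ℝ) ^ n / ((n : ℝ) + 1) ^ 2) (π ^ 2 / 12) := by
  have h := hasSum_one_div_nat_pow_mul_cos one_ne_zero (x := 1 / 2) (by norm_num)
  rw [← bernoulliFun, mul_one, bernoulliFun_two] at h
  have h' := ((hasSum_nat_add_iff' 1).2 h).neg
  have hcos (n : ℕ) : cos (2 * π * ((n + 1 : ℕ) : ℝ) * (1 / 2)) = -(-1) ^ n := by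
    rw [show 2 * π * ((n + 1 : ℕ) : ℝ) * (1 / 2) = ((n + 1 : ℕ) : ℝ) * π by ring, cos_nat_mul_pi,
      pow_succ]
    ring
  simp only [hcos] at h'
  norm_num [Nat.factorial] at h'
  convert h' using 1
  exacts [rfl, funext fun n => by ring, by ring]

theorem integral_Ioo_pow_sub_one {n : ℕ} (hn : n ≠ 0) :
    ∫ x in Ioo (0 : ℝ) 1, x ^ (n - 1) = 1 / n := by
  obtain ⟨k, rfl⟩ := Nat.exists_eq_succ_of_ne_zero hn
  simp [setIntegral_Ioo_eq_intervalIntegral zero_le_one, integral_pow]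

theorem hasSum_log_one_add_pow_div {m : ℕ} (hm : m ≠ 0) {x : ℝ} (hx : x ∈ Ioo (0 : ℝ) 1) :
    HasSum (fun n : ℕ => (-1) ^ n / ((n : ℝ) + 1) * x ^ (m * (n + 1) - 1))
      (log (1 + x ^ m) / x) := by
  have habs : |-x ^ m| < 1 := by
    rw [abs_neg, abs_of_pos (pow_pos hx.1 m)]
    exact pow_lt_one₀ hx.1.le hx.2 hm
  have h := (hasSum_pow_div_log_of_abs_lt_one habs).mul_left (-x⁻¹)
  rw [sub_neg_eq_add, mul_neg, neg_mul, neg_neg, ← div_eq_inv_mul] at h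
  have hterm (n : ℕ) : -x⁻¹ * ((-x ^ m) ^ (n + 1) / (n + 1)) =
      (-1) ^ n / ((n : ℝ) + 1) * x ^ (m * (n + 1) - 1) := by
    have hx₀ : x ≠ 0 := hx.1.ne'
    rw [neg_pow, ← pow_mul, ← pow_sub_one_mul (by positivity) x]
    field_simp
    ring
  simpa only [hterm] using h

theorem integral_log_one_add_pow_div {m : ℕ} (hm : m ≠ 0) :
    ∫ x in Ioo (0 : ℝ) 1, log (1 + x ^ m) / x = π ^ 2 / (12 * m) := by
  set F : ℕ → ℝ → ℝ := fun n x => (-1) ^ n / ((n : ℝ) + 1) * x ^ (m * (n + 1) - 1)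
  have hmn (n : ℕ) : m * (n + 1) ≠ 0 := by positivity
  have hint (n : ℕ) : ∫ x in Ioo (0 : ℝ) 1, F n x = (-1) ^ n / ((n : ℝ) + 1) ^ 2 / m := by
    rw [integral_const_mul, integral_Ioo_pow_sub_one (hmn n)]
    push_cast
    field_simp
  have hnorm (n : ℕ) : ∫ x in Ioo (0 : ℝ) 1, ‖F n x‖ = 1 / ((n : ℝ) + 1) ^ 2 / m := by
    rw [setIntegral_congr_fun measurableSet_Ioo
      (g := fun x => 1 / ((n : ℝ) + 1) * x ^ (m * (n + 1) - 1))
      fun x hx => by simp [F, abs_of_pos hx.1, abs_of_nonneg (Nat.cast_add_one_pos (α := ℝ) n).le]]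
    rw [integral_const_mul, integral_Ioo_pow_sub_one (hmn n)]
    push_cast
    field_simp
  have hsummable : Summable fun n : ℕ => 1 / ((n : ℝ) + 1) ^ 2 / m := by
    have := (summable_nat_add_iff 1).2 (Real.summable_one_div_nat_pow.2 one_lt_two)
    push_cast at this
    exact this.div_const _
  have hsum := hasSum_integral_of_summable_integral_norm (μ := volume.restrict (Ioo (0 : ℝ) 1))
    (F := F) (fun n => (Continuous.integrableOn_Icc (by fun_prop)).mono_set Ioo_subset_Icc_self)
    (by simpa only [hnorm] using hsummable)
  rw [← setIntegral_congr_fun measurableSet_Ioo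
    fun x hx => (hasSum_log_one_add_pow_div hm hx).tsum_eq]
  simp only [hint] at hsum
  exact hsum.unique (by simpa [div_div, mul_comm] using hasSum_neg_one_pow_div_succ_sq.div_const m)

theorem integrableOn_log_one_add_pow_div {m : ℕ} (hm : m ≠ 0) :
    IntegrableOn (fun x => log (1 + x ^ m) / x) (Ioo 0 1) := by
  refine Integrable.mono' (integrableOn_const measure_Ioo_lt_top.ne (C := (1 : ℝ)))
    (Measurable.aestronglyMeasurable (by fun_prop)) ?_
  rw [ae_restrict_iff' measurableSet_Ioo]
  refine ae_of_all _ fun x ⟨hx₀, hx₁⟩ => ?_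
  have hlog : log (1 + x ^ m) ≤ x ^ m := by
    linarith [log_le_sub_one_of_pos (by positivity : 0 < 1 + x ^ m)]
  have hpow : x ^ m ≤ x := pow_le_of_le_one hx₀.le hx₁.le hm
  rw [norm_of_nonneg (div_nonneg (log_nonneg (by nlinarith [pow_pos hx₀ m])) hx₀.le),
    div_le_one hx₀]
  linarith

theorem neg_log_mul_two_div_one_sub_sq_comp_one_sub_div_one_add {s : ℝ} (hs : 0 < s) :
    (2 / (1 + s) ^ 2) • (-log ((1 + ((1 - s) / (1 + s)) ^ 2) / 2) *
        (2 / (1 - ((1 - s) / (1 + s)) ^ 2))) =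
      2 * (log (1 + s ^ 1) / s) - log (1 + s ^ 2) / s := by
  have h₁ : 1 + s ≠ 0 := by linarith
  have hlog : (1 + ((1 - s) / (1 + s)) ^ 2) / 2 = (1 + s ^ 2) / (1 + s) ^ 2 := by
    field_simp
    ring
  have hden : 1 - ((1 - s) / (1 + s)) ^ 2 = 4 * s / (1 + s) ^ 2 := by
    field_simp
    ring
  rw [hlog, hden, log_div (by positivity) (by positivity), log_pow, smul_eq_mul]
  field_simp
  push_cast
  ring

theorem integral_neg_log_mul_two_div_one_sub_sq :
    ∫ x in Ioo (0 : ℝ) 1, -log ((1 + x ^ 2) / 2) * (2 / (1 - x ^ 2)) = π ^ 2 / 8 := by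
  rw [integral_Ioo_zero_one_comp_one_sub_div_one_add, setIntegral_congr_fun measurableSet_Ioo
    fun s hs => neg_log_mul_two_div_one_sub_sq_comp_one_sub_div_one_add hs.1,
    integral_sub ((integrableOn_log_one_add_pow_div one_ne_zero).const_mul 2)
      (integrableOn_log_one_add_pow_div two_ne_zero),
    integral_const_mul, integral_log_one_add_pow_div one_ne_zero,
    integral_log_one_add_pow_div two_ne_zero]
  ring

theorem integrableOn_neg_log_mul_two_div_one_sub_sq :
    IntegrableOn (fun x => -log ((1 + x ^ 2) / 2) * (2 / (1 - x ^ 2))) (Ioo 0 1) := by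
  rw [integrableOn_Ioo_zero_one_iff_comp_one_sub_div_one_add,
    integrableOn_congr_fun
      (fun s hs => neg_log_mul_two_div_one_sub_sq_comp_one_sub_div_one_add hs.1) measurableSet_Ioo]
  exact ((integrableOn_log_one_add_pow_div one_ne_zero).const_mul 2).sub
    (integrableOn_log_one_add_pow_div two_ne_zero)

theorem integral_neg_log_mul_one_add_two_div_one_sub_sq_sub_one :
    ∫ x in Ioo (0 : ℝ) 1, (-log ((1 + x ^ 2) / 2) * (1 + 2 / (1 - x ^ 2)) - 1) =
      (π ^ 2 - 4 * π + 8) / 8 := by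
  have hcont : IntegrableOn (fun x : ℝ => -log ((1 + x ^ 2) / 2)) (Ioo 0 1) :=
    (Continuous.integrableOn_Icc (by fun_prop (disch := intro; positivity))).mono_set
      Ioo_subset_Icc_self
  simp only [mul_one_add]
  rw [integral_sub, integral_add hcont integrableOn_neg_log_mul_two_div_one_sub_sq,
    integral_neg_log_one_add_sq_div_two, integral_neg_log_mul_two_div_one_sub_sq,
    setIntegral_const, Real.volume_real_Ioo_of_le zero_le_one, smul_eq_mul]
  · ring
  · exact hcont.add integrableOn_neg_log_mul_two_div_one_sub_sq
  · exact integrableOn_const measure_Ioo_lt_top.ne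

theorem inv_central_binom_series_pi_sq :
    HasSum
      (fun k : ℕ =>
        (2 : ℝ) ^ (k + 1) /
          ((Nat.choose (2 * (k + 1)) (k + 1) : ℝ) * (2 * ((k : ℝ) + 1)) *
            (2 * ((k : ℝ) + 1) + 2)))
      ((Real.pi ^ 2 - 4 * Real.pi + 8) / 32) := by
  simp only [← Nat.centralBinom_eq_two_mul_choose, two_pow_div_centralBinom_eq_integral]
  have h := hasSum_integral_inv_add_inv_mul_pow.div_const 4
  rwa [integral_neg_log_mul_one_add_two_div_one_sub_sq_sub_one, div_div,
    show (8 : ℝ) * 4 = 32 by norm_num] at h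
end
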